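/- arXiv:0711.1516 — 2 statements merged into one kernel-verified Lean document; each statement's English description precedes it below -/
import Mathlib

section
/- If a topological space X has property S_c(O_fin,O) and F ⊆ X is an F_σ subset of X, then F with the subspace topology has property S_c(O_fin,O). -/
/-- Property `S_c(O_fin,O)`: for each sequence of finite open covers `U n` of `X` there is a
sequence `V n` of pairwise disjoint families of open sets, `V n` refining `U n`, whose union
is a cover of `X`. -/
def ScOFinO (X : Type*) [TopologicalSpace X] : Prop :=
  ∀ U : ℕ → Set (Set X),
    (∀ n, (U n).Finite ∧ (∀ S ∈ U n, IsOpen S) ∧ ⋃₀ U n = Set.univ) →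
    ∃ V : ℕ → Set (Set X),
      (∀ n, (∀ S ∈ V n, IsOpen S) ∧ (V n).Pairwise Disjoint ∧
        ∀ S ∈ V n, ∃ T ∈ U n, S ⊆ T) ∧
      ⋃₀ (⋃ n, V n) = Set.univ

/-!
For a closed `C ⊆ F`, lift each finite open cover of `F` to a finite family of open sets of `X`
and add `Cᶜ` to get an open cover of `X`. Selecting in `X` and keeping only the selected sets
that lie inside a lifted member (those inside just `Cᶜ` miss `C`), their traces on `F` refine
the original covers and cover `C`. The closed pieces `C k` of `F` are then handled one at a
time, on the disjoint subsequences `m ↦ Nat.pair k m` of the given sequence of covers.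
-/

open Set Topology

section Covers

variable {X Y : Type*} [TopologicalSpace X] [TopologicalSpace Y]

def IsFiniteOpenCover (U : Set (Set X)) : Prop :=
  U.Finite ∧ (∀ S ∈ U, IsOpen S) ∧ ⋃₀ U = univ

def IsDisjointOpenRefinement (V U : Set (Set X)) : Prop :=
  (∀ S ∈ V, IsOpen S) ∧ V.Pairwise Disjoint ∧ ∀ S ∈ V, ∃ T ∈ U, S ⊆ T

variable (X) in
def ScOFinOOn (A : Set X) : Prop :=
  ∀ U : ℕ → Set (Set X), (∀ n, IsFiniteOpenCover (U n)) →
    ∃ V : ℕ → Set (Set X), (∀ n, IsDisjointOpenRefinement (V n) (U n)) ∧ A ⊆ ⋃₀ ⋃ n, V n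

theorem scOFinO_iff_scOFinOOn_univ : ScOFinO X ↔ ScOFinOOn X univ := by
  simp only [ScOFinO, ScOFinOOn, IsFiniteOpenCover, IsDisjointOpenRefinement, univ_subset_iff]

theorem ScOFinOOn.iUnion {A : ℕ → Set X} (hA : ∀ k, ScOFinOOn X (A k)) :
    ScOFinOOn X (⋃ k, A k) := by
  intro U hU
  choose V hV hAV using fun k => hA k (fun m => U (Nat.pair k m)) fun m => hU _
  refine ⟨fun n => V n.unpair.1 n.unpair.2, fun n => ?_, ?_⟩
  · simpa only [Nat.pair_unpair] using hV n.unpair.1 n.unpair.2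
  · refine iUnion_subset fun k x hx => ?_
    obtain ⟨S, hS, hxS⟩ := hAV k hx
    obtain ⟨m, hm⟩ := mem_iUnion.mp hS
    exact ⟨S, mem_iUnion.mpr ⟨Nat.pair k m, by simpa only [Nat.unpair_pair] using hm⟩, hxS⟩

theorem IsDisjointOpenRefinement.preimage {f : Y → X} (hf : Continuous f)
    {V W : Set (Set X)} (h : IsDisjointOpenRefinement V W) :
    IsDisjointOpenRefinement ((f ⁻¹' ·) '' V) ((f ⁻¹' ·) '' W) := by
  refine ⟨?_, ?_, ?_⟩
  · rintro _ ⟨S, hS, rfl⟩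
    exact (h.1 S hS).preimage hf
  · rintro _ ⟨S, hS, rfl⟩ _ ⟨S', hS', rfl⟩ hne
    exact (h.2.1 hS hS' (ne_of_apply_ne _ hne)).preimage f
  · rintro _ ⟨S, hS, rfl⟩
    obtain ⟨T, hT, hST⟩ := h.2.2 S hS
    exact ⟨_, mem_image_of_mem _ hT, preimage_mono hST⟩

theorem IsFiniteOpenCover.exists_lift {f : Y → X} (hf : IsInducing f) {U : Set (Set Y)}
    (hU : IsFiniteOpenCover U) {C : Set X} (hC : IsClosed C) (hCf : C ⊆ range f) :
    ∃ W : Set (Set X), IsFiniteOpenCover (insert Cᶜ W) ∧ (f ⁻¹' ·) '' W = U := by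
  choose! e he hfe using fun T hT => hf.isOpen_iff.mp (hU.2.1 T hT)
  refine ⟨e '' U, ⟨(hU.1.image e).insert _, ?_, ?_⟩, ?_⟩
  · rintro _ (rfl | ⟨T, hT, rfl⟩)
    exacts [hC.isOpen_compl, he T hT]
  · refine eq_univ_of_forall fun x => ?_
    by_cases hx : x ∈ C
    · obtain ⟨y, rfl⟩ := hCf hx
      obtain ⟨T, hT, hyT⟩ := mem_sUnion.mp (hU.2.2.symm ▸ mem_univ y)
      exact ⟨e T, mem_insert_of_mem _ ⟨T, hT, rfl⟩, by rwa [← hfe T hT] at hyT⟩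
    · exact ⟨Cᶜ, mem_insert _ _, hx⟩
  · rw [image_image, image_congr hfe, image_id']

theorem ScOFinO.scOFinOOn_preimage {f : Y → X} (hX : ScOFinO X) (hf : IsInducing f)
    {C : Set X} (hC : IsClosed C) (hCf : C ⊆ range f) : ScOFinOOn Y (f ⁻¹' C) := by
  intro U hU
  choose W hW hWU using fun n => (hU n).exists_lift hf hC hCf
  obtain ⟨V, hV, hVcov⟩ := scOFinO_iff_scOFinOOn_univ.mp hX _ hW
  set V' := fun n => {S ∈ V n | ∃ T ∈ W n, S ⊆ T}
  have hV' : ∀ n, IsDisjointOpenRefinement (V' n) (W n) := fun n =>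
    ⟨fun S hS => (hV n).1 S hS.1, (hV n).2.1.mono fun _ hS => hS.1, fun _ hS => hS.2⟩
  refine ⟨fun n => (f ⁻¹' ·) '' V' n, fun n => hWU n ▸ (hV' n).preimage hf.continuous,
    fun y hy => ?_⟩
  obtain ⟨S, hS, hyS⟩ := mem_sUnion.mp (hVcov (mem_univ (f y)))
  obtain ⟨n, hSn⟩ := mem_iUnion.mp hS
  obtain ⟨T, rfl | hT, hST⟩ := (hV n).2.2 S hSn
  · exact (hST hyS hy).elim
  · exact mem_sUnion.mpr ⟨f ⁻¹' S, mem_iUnion.mpr ⟨n, S, ⟨hSn, T, hT, hST⟩, rfl⟩, hyS⟩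

end Covers

/-- Property `S_c(O_fin,O)` is inherited by `F_σ` subsets. -/
theorem scOFinO_of_Fsigma {X : Type*} [TopologicalSpace X] (hX : ScOFinO X) (F : Set X)
    (hF : ∃ C : ℕ → Set X, (∀ n, IsClosed (C n)) ∧ F = ⋃ n, C n) :
    ScOFinO ↥F := by
  obtain ⟨C, hC, rfl⟩ := hF
  have hcover : (univ : Set ↥(⋃ n, C n)) = ⋃ n, Subtype.val ⁻¹' C n := by
    rw [← preimage_iUnion, Subtype.coe_preimage_self]
  rw [scOFinO_iff_scOFinOOn_univ, hcover]
  exact ScOFinOOn.iUnion fun n => hX.scOFinOOn_preimage IsInducing.subtypeVal (hC n)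
    (Subtype.range_coe ▸ subset_iUnion C n)
end

section
/- For a compact topological space X, properties S_c(O_fin,O) and S_c(O,O) are equivalent. -/
/-- Property `S_c(O,O)`: for each sequence of open covers `U n` of `X` there is a sequence
`V n` of pairwise disjoint families of open sets, `V n` refining `U n`, whose union is a
cover of `X`. -/
def ScOO (X : Type*) [TopologicalSpace X] : Prop :=
  ∀ U : ℕ → Set (Set X),
    (∀ n, (∀ S ∈ U n, IsOpen S) ∧ ⋃₀ U n = Set.univ) →
    ∃ V : ℕ → Set (Set X),
      (∀ n, (∀ S ∈ V n, IsOpen S) ∧ (V n).Pairwise Disjoint ∧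
        ∀ S ∈ V n, ∃ T ∈ U n, S ⊆ T) ∧
      ⋃₀ (⋃ n, V n) = Set.univ

section

variable {X : Type*} [TopologicalSpace X]

theorem exists_finite_subcover_of_sUnion_eq_univ [CompactSpace X] {U : Set (Set X)}
    (hUo : ∀ S ∈ U, IsOpen S) (hU : ⋃₀ U = Set.univ) :
    ∃ F ⊆ U, F.Finite ∧ ⋃₀ F = Set.univ := by
  obtain ⟨F, hFU, hF, hcov⟩ := isCompact_univ.elim_finite_subcover_image (c := id) hUo
    (by simp [← Set.sUnion_eq_biUnion, hU])
  exact ⟨F, hFU, hF, Set.univ_subset_iff.mp (by simpa [← Set.sUnion_eq_biUnion] using hcov)⟩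

theorem ScOO.scOFinO (h : ScOO X) : ScOFinO X :=
  fun U hU => h U fun n => (hU n).2

/-- A disjoint refinement of a subcover `F n ⊆ U n` also refines `U n`, so it suffices to
select from finite subcovers. -/
theorem ScOFinO.scOO [CompactSpace X] (h : ScOFinO X) : ScOO X := by
  intro U hU
  choose F hFU hF hFcov using fun n => exists_finite_subcover_of_sUnion_eq_univ (hU n).1 (hU n).2
  obtain ⟨V, hV, hVcov⟩ := h F fun n => ⟨hF n, fun S hS => (hU n).1 S (hFU n hS), hFcov n⟩
  refine ⟨V, fun n => ⟨(hV n).1, (hV n).2.1, fun S hS => ?_⟩, hVcov⟩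
  obtain ⟨T, hT, hST⟩ := (hV n).2.2 S hS
  exact ⟨T, hFU n hT, hST⟩

end

/-- For compact spaces, `S_c(O_fin,O)` and `S_c(O,O)` are equivalent. -/
theorem scOFinO_iff_scOO_of_compact {X : Type*} [TopologicalSpace X] [CompactSpace X] :
    ScOFinO X ↔ ScOO X :=
  ⟨ScOFinO.scOO, ScOO.scOFinO⟩
end
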